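/- Let π be an irreducible permutation of {1,…,d} with π(1) ≠ d or π(d) ≠ 1, and let n = min(π⁻¹(d), π(d)). If n > 1 then there exists j ∈ {1,…,d} with j < n < π(j) or π(j) < n < j. -/
import Mathlib


/-- Key combinatorial step towards standard permutations: let `π` be
irreducible and not standard, and (in 1-indexed terms) let
`n = min(π⁻¹(d), π(d))`.  If `n > 1` then some index `j` separates the two
rows across level `n`: `j < n < π(j)` or `π(j) < n < j`.
(Stated 0-indexed, with positions and values shifted by one.) -/
theorem exists_separating_index (d : ℕ) (hd : 2 ≤ d) (π : Equiv.Perm (Fin d))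
    (hirr : ∀ k : ℕ, 1 ≤ k → k < d → ¬ (∀ i : Fin d, i.val < k → (π i).val < k))
    (hnonstd : π ⟨0, by omega⟩ ≠ ⟨d - 1, by omega⟩ ∨ π ⟨d - 1, by omega⟩ ≠ ⟨0, by omega⟩)
    (n : ℕ)
    (hn : n = min ((π.symm ⟨d - 1, by omega⟩).val + 1) ((π ⟨d - 1, by omega⟩).val + 1))
    (hn1 : 1 < n) :
    ∃ j : Fin d,
      (j.val + 1 < n ∧ n < (π j).val + 1) ∨ ((π j).val + 1 < n ∧ n < j.val + 1) := by
  by_contra hsep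
  push_neg at hsep
  set top : Fin d := ⟨d - 1, by omega⟩ with htop
  set a : ℕ := (π.symm top).val with ha
  set b : ℕ := (π top).val with hb
  set k : ℕ := n - 1 with hk
  have hka : k ≤ a := by omega
  have hkb : k ≤ b := by omega
  have hk1 : 1 ≤ k := by omega
  have hkd : k < d := by
    have : a < d := (π.symm top).isLt
    omega
  -- no separation, restated
  have hfwd : ∀ j : Fin d, j.val < k → (π j).val ≤ k := by
    intro j hj
    have := (hsep j).1
    omega
  have hbwd : ∀ j : Fin d, (π j).val < k → j.val ≤ k := by
    intro j hj
    have := (hsep j).2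
    omega
  apply hirr k hk1 hkd
  intro i hi
  have hile : (π i).val ≤ k := hfwd i hi
  rcases lt_or_eq_of_le hile with h | h
  · exact h
  -- suppose π i = k; derive a contradiction
  exfalso
  by_cases hbk : b = k
  · -- π top = k, so i = top, contradicting i < k
    have : π i = π top := by
      apply Fin.ext
      simp [h, ← hbk, hb]
    have := π.injective this
    rw [this] at hi
    simp [htop] at hi
    omega
  · -- then k = a, i.e. π k = top
    have hak : a = k := by omega
    have hπk : π ⟨k, hkd⟩ = top := by
      have : π.symm top = ⟨k, hkd⟩ := Fin.ext (by simp [← ha, hak])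
      rw [← this, Equiv.apply_symm_apply]
    have hkd1 : k < d - 1 := by
      rcases lt_or_eq_of_le (show k ≤ d - 1 by omega) with h' | h'
      · exact h'
      · -- k = d-1 forces π top = top, so b = d-1 = k, contradiction
        exfalso
        apply hbk
        have : (⟨k, hkd⟩ : Fin d) = top := Fin.ext (by simp [htop, h'])
        rw [this] at hπk
        rw [hb, hπk, htop]
        omega
    -- the set {x : x ≤ k} is mapped into itself by π.symm
    set T : Finset (Fin d) := Finset.univ.filter (fun x => x.val ≤ k) with hT
    have hsub : T.image π.symm ⊆ T := by
      intro x hx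
      simp only [hT, Finset.mem_image, Finset.mem_filter, Finset.mem_univ, true_and] at hx ⊢
      obtain ⟨y, hy, rfl⟩ := hx
      rcases lt_or_eq_of_le hy with h' | h'
      · have : (π (π.symm y)).val < k := by rwa [Equiv.apply_symm_apply]
        exact hbwd _ this
      · -- y.val = k, so π.symm y = i
        have : y = π i := Fin.ext (by omega)
        rw [this, Equiv.symm_apply_apply]
        omega
    have hcard : T.card ≤ (T.image π.symm).card := by
      rw [Finset.card_image_of_injective _ π.symm.injective]
    have heq : T.image π.symm = T := Finset.eq_of_subset_of_card_le hsub hcard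
    have hmem : (⟨k, hkd⟩ : Fin d) ∈ T := by
      simp [hT]
    rw [← heq] at hmem
    simp only [Finset.mem_image, Finset.mem_filter, Finset.mem_univ, true_and, hT] at hmem
    obtain ⟨y, hy, hyk⟩ := hmem
    have : π ⟨k, hkd⟩ = y := by rw [← hyk, Equiv.apply_symm_apply]
    rw [hπk] at this
    rw [← this] at hy
    simp [htop] at hy
    omega
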